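/- Let j, k ≥ 1 with n−j−k ≥ 1 and let f₀(t) = (1+t²)^{−n/2}. Then (I_{j,k} f₀)(s) = c_k (1+s²)^{(j+k−n)/2} for all s > 0, where c_k = π^{k/2} Γ((n−k)/2)/Γ(n/2). -/

import Mathlib

open MeasureTheory Set ENNReal

/-- The Erdélyi–Kober fractional integral of the first kind. -/
noncomputable def EKplus (β : ℝ) (g : ℝ → ℝ≥0∞) (t : ℝ) : ℝ≥0∞ :=
  ENNReal.ofReal (2 / Real.Gamma β) *
    ∫⁻ r in Ioo (0:ℝ) t, ENNReal.ofReal ((t ^ 2 - r ^ 2) ^ (β - 1) * r) * g r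

/-- The Erdélyi–Kober fractional integral of the second kind. -/
noncomputable def EKminus (β : ℝ) (g : ℝ → ℝ≥0∞) (t : ℝ) : ℝ≥0∞ :=
  ENNReal.ofReal (2 / Real.Gamma β) *
    ∫⁻ r in Ioi t, ENNReal.ofReal ((r ^ 2 - t ^ 2) ^ (β - 1) * r) * g r

/-!
Substituting `u = t²` turns both Erdélyi–Kober operators into Riemann–Liouville integrals in `u`.
The inner one, `∫_{r²}^∞ (u - r²)^{k/2-1} (1+u)^{-n/2} du`, is a beta integral of the second kind,
`B(k/2, (n-k)/2) (1+r²)^{-(n-k)/2}`. The outer one,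
`∫_0^{s²} (s² - u)^{j/2-1} u^{ℓ/2-1} (1+u)^{-(j+ℓ)/2} du`, is `B(ℓ/2, j/2) s^{j+ℓ-2} (1+s²)^{-ℓ/2}`
after the Möbius substitution `u = s²x / (1 + s² - s²x)`. The Gamma factors then cancel against
`c̃₁ / s^{j+ℓ-2}`.
-/

section

open ProbabilityTheory

lemma lintegral_Ioo_rpow_mul_one_sub_rpow {a b : ℝ} (ha : 0 < a) (hb : 0 < b) :
    ∫⁻ x in Ioo 0 1, ENNReal.ofReal (x ^ (a - 1) * (1 - x) ^ (b - 1)) =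
      ENNReal.ofReal (beta a b) := by
  have h := lintegral_betaPDF_eq_one ha hb
  have hB := beta_pos ha hb
  simp_rw [lintegral_betaPDF, mul_assoc, ENNReal.ofReal_mul (one_div_pos.2 hB).le] at h
  rw [lintegral_const_mul' _ _ ofReal_ne_top, ← ENNReal.eq_div_iff (by simpa using hB)
    ofReal_ne_top, one_div, ← ENNReal.ofReal_inv_of_pos (by positivity), one_div,
    inv_inv] at h
  exact h

lemma image_div_one_sub_sub_one_Ioo {A : ℝ} (hA : 0 < A) :
    (fun y => A / (1 - y) - 1) '' Ioo 0 1 = Ioi (A - 1) := by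
  ext u
  constructor
  · rintro ⟨y, ⟨hy0, hy1⟩, rfl⟩
    have : A < A / (1 - y) := by rw [lt_div_iff₀ (by linarith)]; nlinarith
    exact sub_lt_sub_right this 1
  · intro (hu : A - 1 < u)
    have hu1 : 0 < 1 + u := by linarith
    refine ⟨1 - A / (1 + u), ⟨?_, ?_⟩, ?_⟩
    · rw [sub_pos, div_lt_one hu1]; linarith
    · simp only [sub_lt_self_iff]; positivity
    · show A / (1 - (1 - A / (1 + u))) - 1 = u
      rw [_root_.sub_sub_cancel, div_div_cancel₀ hA.ne', add_sub_cancel_left]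

lemma image_div_sub_mul_sub_one_Ioo {S : ℝ} (hS : 0 < S) :
    (fun x => (1 + S) / (1 + S - S * x) - 1) '' Ioo 0 1 = Ioo 0 S := by
  have hP : 0 < 1 + S := by linarith
  ext u
  constructor
  · rintro ⟨x, ⟨hx0, hx1⟩, rfl⟩
    have hD : 0 < 1 + S - S * x := by nlinarith
    constructor
    · rw [sub_pos, one_lt_div hD]; nlinarith
    · rw [sub_lt_iff_lt_add, div_lt_iff₀ hD]
      nlinarith [mul_pos (mul_pos hP hS) (sub_pos.2 hx1)]
  · rintro ⟨hu0, huS⟩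
    refine ⟨(1 + S - (1 + S) / (1 + u)) / S, ⟨?_, ?_⟩, ?_⟩
    · apply div_pos _ hS
      rw [sub_pos, div_lt_iff₀ (by linarith)]; nlinarith
    · rw [div_lt_one hS, sub_lt_iff_lt_add, ← sub_lt_iff_lt_add', lt_div_iff₀ (by linarith)]
      nlinarith
    · show (1 + S) / (1 + S - S * ((1 + S - (1 + S) / (1 + u)) / S)) - 1 = u
      rw [mul_div_cancel₀ _ hS.ne', _root_.sub_sub_cancel, div_div_cancel₀ hP.ne',
        add_sub_cancel_left]

lemma lintegral_Ioi_sub_rpow_mul_one_add_rpow {a b c : ℝ} (ha : 0 < a) (hb : 0 < b)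
    (hc : -1 < c) :
    ∫⁻ u in Ioi c, ENNReal.ofReal ((u - c) ^ (a - 1) * (1 + u) ^ (-(a + b))) =
      ENNReal.ofReal ((1 + c) ^ (-b) * beta a b) := by
  have hA : 0 < 1 + c := by linarith
  set A := 1 + c
  have hderiv : ∀ y ∈ Ioo (0:ℝ) 1, HasDerivWithinAt (fun y => A / (1 - y) - 1)
      (A / (1 - y) ^ 2) (Ioo 0 1) y := by
    intro y ⟨_, hy1⟩
    have := ((hasDerivAt_const y A).div ((hasDerivAt_id y).const_sub 1)
      (by simp; linarith)).sub_const 1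
    exact (this.congr_deriv (by simp)).hasDerivWithinAt
  have hmono : MonotoneOn (fun y => A / (1 - y) - 1) (Ioo 0 1) := by
    intro x _ y ⟨_, hy1⟩ hxy
    dsimp only
    gcongr
  rw [← add_sub_cancel_left 1 c, ← image_div_one_sub_sub_one_Ioo hA,
    lintegral_image_eq_lintegral_deriv_mul_of_monotoneOn measurableSet_Ioo hderiv hmono,
    ENNReal.ofReal_mul (by positivity), ← lintegral_Ioo_rpow_mul_one_sub_rpow ha hb,
    ← lintegral_const_mul' _ _ ofReal_ne_top]
  refine setLIntegral_congr_fun measurableSet_Ioo fun y ⟨hy0, hy1⟩ => ?_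
  have h1y : 0 < 1 - y := by linarith
  have hy : A / (1 - y) - 1 - (A - 1) = A * y / (1 - y) := by field_simp; ring
  rw [← ENNReal.ofReal_mul (by positivity), ← ENNReal.ofReal_mul (by positivity), hy,
    add_sub_cancel]
  congr 1
  rw [Real.div_rpow (by positivity) h1y.le, Real.mul_rpow hA.le hy0.le,
    Real.div_rpow hA.le h1y.le]
  simp only [Real.rpow_sub_one hA.ne', Real.rpow_sub_one hy0.ne', Real.rpow_sub_one h1y.ne',
    Real.rpow_neg hA.le, Real.rpow_neg h1y.le, Real.rpow_add hA, Real.rpow_add h1y]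
  field_simp

lemma lintegral_Ioo_rpow_mul_sub_rpow_mul_one_add_rpow {a b S : ℝ} (ha : 0 < a) (hb : 0 < b)
    (hS : 0 < S) :
    ∫⁻ u in Ioo 0 S, ENNReal.ofReal (u ^ (a - 1) * (S - u) ^ (b - 1) * (1 + u) ^ (-(a + b))) =
      ENNReal.ofReal (S ^ (a + b - 1) * (1 + S) ^ (-a) * beta a b) := by
  have hP : 0 < 1 + S := by linarith
  have hD : ∀ x < 1, 0 < 1 + S - S * x := fun x hx => by nlinarith
  have hderiv : ∀ x ∈ Ioo (0:ℝ) 1, HasDerivWithinAt (fun x => (1 + S) / (1 + S - S * x) - 1)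
      ((1 + S) * S / (1 + S - S * x) ^ 2) (Ioo 0 1) x := by
    intro x ⟨_, hx1⟩
    have := ((hasDerivAt_const x (1 + S)).div (((hasDerivAt_id x).const_mul S).const_sub (1 + S))
      (hD x hx1).ne').sub_const 1
    exact (this.congr_deriv (by simp)).hasDerivWithinAt
  have hmono : MonotoneOn (fun x => (1 + S) / (1 + S - S * x) - 1) (Ioo 0 1) := by
    intro x _ y ⟨_, hy1⟩ hxy
    have := hD y hy1
    dsimp only
    gcongr
  rw [← image_div_sub_mul_sub_one_Ioo hS,
    lintegral_image_eq_lintegral_deriv_mul_of_monotoneOn measurableSet_Ioo hderiv hmono,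
    ENNReal.ofReal_mul (by positivity), ← lintegral_Ioo_rpow_mul_one_sub_rpow ha hb,
    ← lintegral_const_mul' _ _ ofReal_ne_top]
  refine setLIntegral_congr_fun measurableSet_Ioo fun x ⟨hx0, hx1⟩ => ?_
  have h1x : 0 < 1 - x := by linarith
  have hDx := hD x hx1
  set D := 1 + S - S * x
  have hu : (1 + S) / D - 1 = S * x / D := by field_simp; ring
  have hSu : S - S * x / D = S * (1 + S) * (1 - x) / D := by field_simp; ring
  have h1u : 1 + S * x / D = (1 + S) / D := by rw [← hu]; ring
  rw [← ENNReal.ofReal_mul (by positivity), ← ENNReal.ofReal_mul (by positivity), hu, hSu, h1u]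
  congr 1
  rw [Real.div_rpow (by positivity) hDx.le, Real.div_rpow (by positivity) hDx.le,
    Real.div_rpow hP.le hDx.le, Real.mul_rpow hS.le hx0.le, Real.mul_rpow (by positivity) h1x.le,
    Real.mul_rpow hS.le hP.le]
  simp only [Real.rpow_sub_one hS.ne', Real.rpow_sub_one hx0.ne', Real.rpow_sub_one hP.ne',
    Real.rpow_sub_one h1x.ne', Real.rpow_sub_one hDx.ne', Real.rpow_neg hP.le, Real.rpow_neg hDx.le,
    Real.rpow_add hS, Real.rpow_add hP, Real.rpow_add hDx]
  field_simp

lemma image_sq_Ioo {a b : ℝ} (ha : 0 ≤ a) (hb : 0 ≤ b) :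
    (· ^ 2) '' Ioo a b = Ioo (a ^ 2) (b ^ 2) := by
  ext u
  constructor
  · rintro ⟨t, ⟨hat, htb⟩, rfl⟩
    exact ⟨pow_lt_pow_left₀ hat ha two_ne_zero, pow_lt_pow_left₀ htb (ha.trans hat.le) two_ne_zero⟩
  · rintro ⟨hau, hub⟩
    have hu : 0 ≤ u := (sq_nonneg a).trans hau.le
    exact ⟨√u, ⟨(Real.lt_sqrt ha).2 hau, (Real.sqrt_lt hu hb).2 hub⟩, Real.sq_sqrt hu⟩

lemma image_sq_Ioi {a : ℝ} (ha : 0 ≤ a) : (· ^ 2) '' Ioi a = Ioi (a ^ 2) := by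
  ext u
  constructor
  · rintro ⟨t, hat, rfl⟩
    exact pow_lt_pow_left₀ hat ha two_ne_zero
  · intro hau
    exact ⟨√u, (Real.lt_sqrt ha).2 hau, Real.sq_sqrt ((sq_nonneg a).trans hau.le)⟩

lemma lintegral_image_sq {s : Set ℝ} (hs : MeasurableSet s) (h0 : s ⊆ Ioi 0) (G : ℝ → ℝ≥0∞) :
    ∫⁻ u in (· ^ 2) '' s, G u = ∫⁻ t in s, ENNReal.ofReal (2 * t) * G (t ^ 2) :=
  lintegral_image_eq_lintegral_deriv_mul_of_monotoneOn hs (f' := fun t => 2 * t)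
    (fun t _ => by simpa using (hasDerivAt_pow 2 t).hasDerivWithinAt)
    (fun _ hx _ _ hxy => pow_le_pow_left₀ (h0 hx).le hxy 2) G

lemma ofReal_two_div_mul_mul {c x t : ℝ} (hx : 0 ≤ x) (y : ℝ≥0∞) :
    ENNReal.ofReal (2 / c) * (ENNReal.ofReal (x * t) * y) =
      ENNReal.ofReal (1 / c) * (ENNReal.ofReal (2 * t) * (ENNReal.ofReal x * y)) := by
  rw [div_eq_mul_one_div 2 c, mul_comm 2, ENNReal.ofReal_mul' zero_le_two,
    ENNReal.ofReal_mul hx, ENNReal.ofReal_mul zero_le_two]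
  ring

lemma EKplus_eq_lintegral_sq {β s : ℝ} (hs : 0 ≤ s) {g G : ℝ → ℝ≥0∞}
    (hg : ∀ t ∈ Ioo 0 s, g t = G (t ^ 2)) :
    EKplus β g s = ENNReal.ofReal (1 / Real.Gamma β) *
      ∫⁻ u in Ioo 0 (s ^ 2), ENNReal.ofReal ((s ^ 2 - u) ^ (β - 1)) * G u := by
  have himage : (· ^ 2) '' Ioo 0 s = Ioo 0 (s ^ 2) := by simpa using image_sq_Ioo le_rfl hs
  rw [EKplus, ← himage, lintegral_image_sq measurableSet_Ioo fun t ht => ht.1,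
    ← lintegral_const_mul' _ _ ofReal_ne_top, ← lintegral_const_mul' _ _ ofReal_ne_top]
  refine setLIntegral_congr_fun measurableSet_Ioo fun t ht => ?_
  rw [hg t ht, ofReal_two_div_mul_mul _]
  exact Real.rpow_nonneg (sub_nonneg.2 (pow_le_pow_left₀ ht.1.le ht.2.le 2)) _

lemma EKminus_eq_lintegral_sq {β r : ℝ} (hr : 0 ≤ r) {g G : ℝ → ℝ≥0∞}
    (hg : ∀ t ∈ Ioi r, g t = G (t ^ 2)) :
    EKminus β g r = ENNReal.ofReal (1 / Real.Gamma β) *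
      ∫⁻ u in Ioi (r ^ 2), ENNReal.ofReal ((u - r ^ 2) ^ (β - 1)) * G u := by
  rw [EKminus, ← image_sq_Ioi hr,
    lintegral_image_sq measurableSet_Ioi fun t ht => hr.trans_lt ht,
    ← lintegral_const_mul' _ _ ofReal_ne_top, ← lintegral_const_mul' _ _ ofReal_ne_top]
  refine setLIntegral_congr_fun measurableSet_Ioi fun t (ht : r < t) => ?_
  rw [hg t ht, ofReal_two_div_mul_mul _]
  exact Real.rpow_nonneg (sub_nonneg.2 (pow_le_pow_left₀ hr ht.le 2)) _

lemma EKminus_one_add_sq_rpow {β μ r : ℝ} (hβ : 0 < β) (hμ : 0 < μ) (hr : 0 ≤ r) :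
    EKminus β (fun t => ENNReal.ofReal ((1 + t ^ 2) ^ (-(β + μ)))) r =
      ENNReal.ofReal (Real.Gamma μ / Real.Gamma (β + μ) * (1 + r ^ 2) ^ (-μ)) := by
  rw [EKminus_eq_lintegral_sq hr (G := fun u => ENNReal.ofReal ((1 + u) ^ (-(β + μ))))
      fun _ _ => rfl,
    setLIntegral_congr_fun measurableSet_Ioi fun u (hu : r ^ 2 < u) =>
      (ENNReal.ofReal_mul (Real.rpow_nonneg (sub_nonneg.2 hu.le) _)).symm,
    lintegral_Ioi_sub_rpow_mul_one_add_rpow hβ hμ (by linarith [sq_nonneg r]),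
    ← ENNReal.ofReal_mul (by positivity)]
  congr 1
  rw [beta]
  field_simp

lemma EKplus_rpow_mul_one_add_sq_rpow {α β s : ℝ} (hα : 0 < α) (hβ : 0 < β) (hs : 0 < s)
    {g : ℝ → ℝ≥0∞} (c : ℝ≥0∞)
    (hg : ∀ r ∈ Ioo 0 s, g r = c * ENNReal.ofReal ((r ^ 2) ^ (α - 1) * (1 + r ^ 2) ^ (-(α + β)))) :
    EKplus β g s = c * ENNReal.ofReal (Real.Gamma α / Real.Gamma (α + β) *
      (s ^ 2) ^ (α + β - 1) * (1 + s ^ 2) ^ (-α)) := by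
  have hS : 0 < s ^ 2 := by positivity
  have key : ∫⁻ u in Ioo 0 (s ^ 2), ENNReal.ofReal ((s ^ 2 - u) ^ (β - 1)) *
        (c * ENNReal.ofReal (u ^ (α - 1) * (1 + u) ^ (-(α + β)))) =
      c * ENNReal.ofReal ((s ^ 2) ^ (α + β - 1) * (1 + s ^ 2) ^ (-α) * beta α β) := by
    rw [← lintegral_Ioo_rpow_mul_sub_rpow_mul_one_add_rpow hα hβ hS,
      ← lintegral_const_mul c (by fun_prop)]
    refine setLIntegral_congr_fun measurableSet_Ioo fun u hu => ?_
    rw [mul_left_comm, ← ENNReal.ofReal_mul (Real.rpow_nonneg (sub_nonneg.2 hu.2.le) _)]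
    congr 2
    ring
  rw [EKplus_eq_lintegral_sq hs.le
      (G := fun u => c * ENNReal.ofReal (u ^ (α - 1) * (1 + u) ^ (-(α + β)))) hg,
    key, mul_left_comm, ← ENNReal.ofReal_mul (by positivity)]
  congr 2
  rw [beta]
  field_simp

end

/-- The mixed Radon transform of `f₀(t) = (1+t²)^{−n/2}`:
`(I_{j,k} f₀)(s) = c_k (1+s²)^{(j+k−n)/2}` with `c_k = π^{k/2} Γ((n−k)/2)/Γ(n/2)`. -/
theorem mixed_radon_poisson (n j k ℓ : ℕ) (hj : 1 ≤ j) (hk : 1 ≤ k)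
    (hℓ : 1 ≤ ℓ) (hn : n = j + k + ℓ) :
    ∀ s > (0:ℝ),
      ENNReal.ofReal
          ((Real.pi ^ ((k : ℝ) / 2) * Real.Gamma (((n : ℝ) - k) / 2) /
              Real.Gamma (((n : ℝ) - j - k) / 2)) / s ^ ((n : ℝ) - k - 2)) *
        EKplus ((j : ℝ) / 2)
          (fun r => ENNReal.ofReal (r ^ ((ℓ : ℝ) - 2)) *
            EKminus ((k : ℝ) / 2)
              (fun t => ENNReal.ofReal ((1 + t ^ 2) ^ (-(n : ℝ) / 2))) r) s
      = ENNReal.ofReal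
          ((Real.pi ^ ((k : ℝ) / 2) * Real.Gamma (((n : ℝ) - k) / 2) /
              Real.Gamma ((n : ℝ) / 2)) *
            (1 + s ^ 2) ^ (((j : ℝ) + k - n) / 2)) := by
  intro s hs
  have hn' : (n : ℝ) = j + k + ℓ := by exact_mod_cast hn
  have hj' : (0 : ℝ) < j / 2 := by positivity
  have hk' : (0 : ℝ) < k / 2 := by positivity
  have hℓ' : (0 : ℝ) < ℓ / 2 := by positivity
  have inner : ∀ r ∈ Ioo 0 s, ENNReal.ofReal (r ^ ((ℓ : ℝ) - 2)) *
      EKminus ((k : ℝ) / 2) (fun t => ENNReal.ofReal ((1 + t ^ 2) ^ (-(n : ℝ) / 2))) r =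
      ENNReal.ofReal (Real.Gamma (ℓ / 2 + j / 2) / Real.Gamma (n / 2)) *
        ENNReal.ofReal ((r ^ 2) ^ ((ℓ : ℝ) / 2 - 1) * (1 + r ^ 2) ^ (-((ℓ : ℝ) / 2 + j / 2))) := by
    intro r ⟨hr, _⟩
    have hrpow : r ^ ((ℓ : ℝ) - 2) = (r ^ 2) ^ ((ℓ : ℝ) / 2 - 1) := by
      rw [← Real.rpow_natCast, ← Real.rpow_mul hr.le]
      ring_nf
    rw [show -(n : ℝ) / 2 = -(k / 2 + (ℓ / 2 + j / 2)) by rw [hn']; ring,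
      EKminus_one_add_sq_rpow hk' (by positivity) hr.le, hrpow,
      show (k : ℝ) / 2 + (ℓ / 2 + j / 2) = n / 2 by rw [hn']; ring, ← ENNReal.ofReal_mul',
      ← ENNReal.ofReal_mul (by positivity)]
    · ring_nf
    · positivity
  rw [EKplus_rpow_mul_one_add_sq_rpow hℓ' hj' hs _ inner,
    show ((n : ℝ) - k) / 2 = ℓ / 2 + j / 2 by rw [hn']; ring,
    show ((n : ℝ) - j - k) / 2 = ℓ / 2 by rw [hn']; ring,
    show ((j : ℝ) + k - n) / 2 = -(ℓ / 2) by rw [hn']; ring,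
    show (n : ℝ) - k - 2 = 2 * (ℓ / 2 + j / 2 - 1) by rw [hn']; ring,
    Real.rpow_mul hs.le, ← mul_assoc, ← ENNReal.ofReal_mul (by positivity),
    ← ENNReal.ofReal_mul (by positivity)]
  congr 1
  norm_cast
  field_simp
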